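/- For every integer i ≥ 2 and μ, ν ∈ {0,1}, the total weight ω_{μν}(V(Υ_i^{μν})) equals 3(9i − (6+μ+ν)) − 1, and for every vertex z of Υ_i^{μν} the weight of its neighbourhood satisfies ω_{μν}(N(z)) = 9i − (6+μ+ν). -/

import Mathlib

open Finset

/-- Base adjacency relation for the Vega graph: vertices are the vertices of the
Andrasfai graph (inl) together with x,y,a,b,c,u,v,w coded as inr 0,...,inr 7. -/
def vegaBase (i : ℕ) : (Fin (3 * i - 1) ⊕ Fin 8) → (Fin (3 * i - 1) ⊕ Fin 8) → Prop
  | Sum.inl j, Sum.inl l =>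
      (l.val + (3 * i - 1) - j.val) % (3 * i - 1) ∈ Finset.Icc i (2 * i - 1)
  | Sum.inr h, Sum.inl j =>
      ((h = 2 ∨ h = 5) ∧ j.val < i) ∨
      ((h = 3 ∨ h = 6) ∧ i ≤ j.val ∧ j.val < 2 * i) ∨
      ((h = 4 ∨ h = 7) ∧ 2 * i ≤ j.val)
  | Sum.inl _, Sum.inr _ => False
  | Sum.inr h, Sum.inr h' =>
      (h = 0 ∧ h' = 1) ∨ (h = 2 ∧ h' = 6) ∨ (h = 6 ∧ h' = 4) ∨ (h = 4 ∧ h' = 5) ∨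
      (h = 5 ∧ h' = 3) ∨ (h = 3 ∧ h' = 7) ∨ (h = 7 ∧ h' = 2) ∨
      (h = 0 ∧ h' = 2) ∨ (h = 0 ∧ h' = 3) ∨ (h = 0 ∧ h' = 4) ∨
      (h = 1 ∧ h' = 5) ∨ (h = 1 ∧ h' = 6) ∨ (h = 1 ∧ h' = 7)

/-- The Vega graph Υ_i^{00}. -/
def vega (i : ℕ) : SimpleGraph (Fin (3 * i - 1) ⊕ Fin 8) where
  Adj z z' := z ≠ z' ∧ (vegaBase i z z' ∨ vegaBase i z' z)
  symm := ⟨fun _ _ h => ⟨h.1.symm, h.2.symm⟩⟩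
  loopless := ⟨fun _ h => h.1 rfl⟩

/-- The weight ω_{00}. -/
def vegaW00 (i : ℕ) : (Fin (3 * i - 1) ⊕ Fin 8) → ℤ
  | Sum.inl j => if j.val = 0 ∨ j.val = 2 * i - 1 then 1 else 3
  | Sum.inr h => if h = 0 ∨ h = 1 then 1
      else if h = 4 ∨ h = 7 then 3 * (i : ℤ) - 3 else 3 * (i : ℤ) - 2

/-- The correction function f (1 on u,v,w,y; -1 on x). -/
def vegaF (i : ℕ) : (Fin (3 * i - 1) ⊕ Fin 8) → ℤ
  | Sum.inl _ => 0
  | Sum.inr h => if h = 1 ∨ h = 5 ∨ h = 6 ∨ h = 7 then 1 else if h = 0 then -1 else 0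

/-- The correction function g (1 on b, v, v_{i-1}, v_{2i-1}; -1 on v_0). -/
def vegaG (i : ℕ) : (Fin (3 * i - 1) ⊕ Fin 8) → ℤ
  | Sum.inl j => if j.val = i - 1 ∨ j.val = 2 * i - 1 then 1
      else if j.val = 0 then -1 else 0
  | Sum.inr h => if h = 3 ∨ h = 6 then 1 else 0

/-- The weight ω_{μν} = ω_{00} - μ f - ν g. -/
def vegaW (i μ ν : ℕ) (z : Fin (3 * i - 1) ⊕ Fin 8) : ℤ :=
  vegaW00 i z - μ * vegaF i z - ν * vegaG i z

/-- The blow-up of a graph `F` with class sizes given by `w`. -/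
def SimpleGraph.blowup {α : Type*} (F : SimpleGraph α) (w : α → ℕ) :
    SimpleGraph (Σ a, Fin (w a)) where
  Adj x y := F.Adj x.1 y.1
  symm := ⟨fun _ _ h => F.symm.symm _ _ h⟩
  loopless := ⟨fun x h => F.loopless.irrefl x.1 h⟩

/-!
The Andrásfai part is the circulant graph on `ℤ/(3i-1)` in which `v_j` sees the arc
`v_{j+i}, …, v_{j+2i-1}`, so each `v_j` has exactly `i` Andrásfai neighbours. Since `ω_{μν}` is
`3` on it except at `v_0`, `v_{i-1}`, `v_{2i-1}`, the weight of a set of Andrásfai vertices is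
three times its size, corrected at these three vertices. The three intervals seen by `a, u`, by
`b, v` and by `c, w` weigh `3i-2`, `3i-2-ν` and `3i-3`; the rest is read off the 6-cycle and the
edge `xy`. The computation is exact for all `μ, ν`: every neighbourhood weighs `9i-(6+μ+ν)`,
except that `y` loses `μ` and `v_{2i-1}` loses `ν`, which is why these vertices are deleted.
-/

theorem Fin.val_sub_eq_ite {n : ℕ} (a b : Fin n) :
    ((a - b : Fin n) : ℕ) = if (b : ℕ) ≤ a then (a : ℕ) - b else n + a - b := by
  split_ifs with h
  · exact Fin.sub_val_of_le h
  · exact Fin.coe_sub_iff_lt.2 (not_le.1 h)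

theorem Fin.card_filter_val_mem {n : ℕ} {s : Finset ℕ} (hs : ∀ m ∈ s, m < n) :
    #{l : Fin n | (l : ℕ) ∈ s} = #s := by
  rw [← card_map Fin.valEmbedding]
  congr 1
  ext m
  simp only [mem_map, mem_filter, mem_univ, true_and, Fin.valEmbedding_apply]
  exact ⟨fun ⟨l, hl, hlm⟩ => hlm ▸ hl, fun hm => ⟨⟨m, hs m hm⟩, hm, rfl⟩⟩

theorem Fin.card_filter_sub_val_mem {n : ℕ} [NeZero n] (s : Finset ℕ) (j : Fin n) :
    #{l : Fin n | ((l - j : Fin n) : ℕ) ∈ s} = #{d : Fin n | (d : ℕ) ∈ s} :=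
  card_equiv (Equiv.subRight j) (by simp)

theorem SimpleGraph.sum_neighborFinset_sum_type {α β M : Type*} [Fintype α] [Fintype β]
    [AddCommMonoid M] (G : SimpleGraph (α ⊕ β)) [DecidableRel G.Adj] (z : α ⊕ β)
    [Fintype (G.neighborSet z)] (f : α ⊕ β → M) :
    ∑ z' ∈ G.neighborFinset z, f z' =
      ∑ a with G.Adj z (.inl a), f (.inl a) + ∑ b with G.Adj z (.inr b), f (.inr b) := by
  have hN : G.neighborFinset z = ({z' | G.Adj z z'} : Finset _) := by ext; simp
  rw [hN, sum_filter, Fintype.sum_sum_type, sum_filter, sum_filter]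

section Vega

open scoped Classical

variable {i : ℕ} (μ ν : ℕ)

theorem vega_adj_inl_inl (j l : Fin (3 * i - 1)) :
    (vega i).Adj (.inl j) (.inl l) ↔ ((l - j : Fin _) : ℕ) ∈ Icc i (2 * i - 1) := by
  have hmod (a b : Fin (3 * i - 1)) :
      ((a : ℕ) + (3 * i - 1) - b) % (3 * i - 1) = ((a - b : Fin _) : ℕ) := by
    rw [Fin.val_sub]; congr 1; omega
  change _ ≠ _ ∧ (vegaBase i _ _ ∨ vegaBase i _ _) ↔ _
  simp only [vegaBase, hmod, Fin.val_sub_eq_ite, mem_Icc, ne_eq, Sum.inl.injEq, Fin.ext_iff]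
  split_ifs <;> omega

theorem vega_adj_inl_inr (j : Fin (3 * i - 1)) (h : Fin 8) :
    (vega i).Adj (.inl j) (.inr h) ↔ vegaBase i (.inr h) (.inl j) := by
  change _ ≠ _ ∧ (False ∨ _) ↔ _
  simp

theorem vega_adj_inr_inl (h : Fin 8) (l : Fin (3 * i - 1)) :
    (vega i).Adj (.inr h) (.inl l) ↔ vegaBase i (.inr h) (.inl l) :=
  (vega i).adj_comm _ _ |>.trans (vega_adj_inl_inr l h)

theorem vega_adj_inr_inr (h h' : Fin 8) :
    (vega i).Adj (.inr h) (.inr h') ↔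
      h ≠ h' ∧ (vegaBase i (.inr h) (.inr h') ∨ vegaBase i (.inr h') (.inr h)) :=
  and_congr_left' Sum.inr_injective.ne_iff

theorem vegaW_inl (hi : 2 ≤ i) (l : Fin (3 * i - 1)) :
    vegaW i μ ν (.inl l) = 3 - (2 - ν : ℤ) * (if l = ⟨0, by omega⟩ then 1 else 0)
      - (2 + ν : ℤ) * (if l = ⟨2 * i - 1, by omega⟩ then 1 else 0)
      - (ν : ℤ) * (if l = ⟨i - 1, by omega⟩ then 1 else 0) := by
  simp only [vegaW, vegaW00, vegaF, vegaG, Fin.ext_iff]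
  split_ifs <;> omega

theorem sum_vegaW_inl (hi : 2 ≤ i) (S : Finset (Fin (3 * i - 1))) :
    ∑ l ∈ S, vegaW i μ ν (.inl l) =
      3 * #S - (2 - ν : ℤ) * (if ⟨0, by omega⟩ ∈ S then 1 else 0)
      - (2 + ν : ℤ) * (if ⟨2 * i - 1, by omega⟩ ∈ S then 1 else 0)
      - (ν : ℤ) * (if ⟨i - 1, by omega⟩ ∈ S then 1 else 0) := by
  simp only [vegaW_inl μ ν hi, sum_sub_distrib, ← mul_sum, sum_ite_eq', sum_const, nsmul_eq_mul,
    mul_comm (3 : ℤ)]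

theorem sum_vegaW_inl_filter_mem_Ico (hi : 2 ≤ i) {a b : ℕ} (hb : b ≤ 3 * i - 1)
    (p : Fin (3 * i - 1) → Prop) [DecidablePred p] (hp : ∀ l, p l ↔ (l : ℕ) ∈ Ico a b) :
    ∑ l with p l, vegaW i μ ν (.inl l) =
      3 * (b - a : ℕ) - (2 - ν : ℤ) * (if 0 ∈ Ico a b then 1 else 0)
        - (2 + ν : ℤ) * (if 2 * i - 1 ∈ Ico a b then 1 else 0)
        - (ν : ℤ) * (if i - 1 ∈ Ico a b then 1 else 0) := by
  rw [sum_vegaW_inl μ ν hi, filter_congr (fun l _ => hp l),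
    Fin.card_filter_val_mem (fun m hm => by simp only [mem_Ico] at hm; omega), Nat.card_Ico]
  simp only [mem_filter, mem_univ, true_and]

theorem sum_vegaW (hi : 2 ≤ i) :
    ∑ z, vegaW i μ ν z = 3 * (9 * i - (6 + μ + ν)) - 1 := by
  rw [Fintype.sum_sum_type, sum_vegaW_inl μ ν hi, Fin.sum_univ_eight]
  simp (config := { decide := true }) [vegaW, vegaW00, vegaF, vegaG]
  omega

theorem sum_vegaW_inl_adj_inl (hi : 2 ≤ i) (j : Fin (3 * i - 1)) :
    ∑ l with (vega i).Adj (.inl j) (.inl l), vegaW i μ ν (.inl l) =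
      3 * i - (2 - ν : ℤ) * (if i ≤ (j : ℕ) ∧ (j : ℕ) ≤ 2 * i - 1 then 1 else 0)
        - (2 + ν : ℤ) * (if (j : ℕ) < i then 1 else 0)
        - (ν : ℤ) * (if 2 * i - 1 ≤ (j : ℕ) then 1 else 0) := by
  have : NeZero (3 * i - 1) := ⟨by omega⟩
  have arc_mem (m : ℕ) (hm : m < 3 * i - 1) :
      ((⟨m, hm⟩ - j : Fin _) : ℕ) ∈ Icc i (2 * i - 1) ↔
        j + i ≤ m ∧ m ≤ j + 2 * i - 1 ∨
          j + i ≤ m + (3 * i - 1) ∧ m + (3 * i - 1) ≤ j + 2 * i - 1 := by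
    simp only [Fin.val_sub_eq_ite, mem_Icc]
    split_ifs <;> omega
  simp_rw [vega_adj_inl_inl]
  rw [sum_vegaW_inl μ ν hi, Fin.card_filter_sub_val_mem,
    Fin.card_filter_val_mem (fun m hm => by simp only [mem_Icc] at hm; omega), Nat.card_Icc,
    show 2 * i - 1 + 1 - i = i by omega]
  simp only [mem_filter, mem_univ, true_and, arc_mem]
  split_ifs <;> omega

theorem sum_vegaW_inr_adj_inl (j : Fin (3 * i - 1)) :
    ∑ h with (vega i).Adj (.inl j) (.inr h), vegaW i μ ν (.inr h) =
      if (j : ℕ) < i then (6 * i - 4 - μ : ℤ)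
      else if (j : ℕ) < 2 * i then (6 * i - 4 - μ - 2 * ν : ℤ)
      else (6 * i - 6 - μ : ℤ) := by
  simp (config := { decide := true }) [vega_adj_inl_inr, sum_filter, Fin.sum_univ_eight, vegaBase,
    vegaW, vegaW00, vegaF, vegaG]
  split_ifs <;> omega

theorem sum_vegaW_neighborFinset_inl (hi : 2 ≤ i) (j : Fin (3 * i - 1)) :
    ∑ z' ∈ (vega i).neighborFinset (.inl j), vegaW i μ ν z' =
      9 * i - (6 + μ + ν) - ν * (if (j : ℕ) = 2 * i - 1 then 1 else 0) := by
  rw [SimpleGraph.sum_neighborFinset_sum_type, sum_vegaW_inl_adj_inl μ ν hi,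
    sum_vegaW_inr_adj_inl]
  split_ifs <;> omega

theorem sum_vegaW_neighborFinset_inr (hi : 2 ≤ i) (h : Fin 8) :
    ∑ z' ∈ (vega i).neighborFinset (.inr h), vegaW i μ ν z' =
      9 * i - (6 + μ + ν) - μ * (if h = 1 then 1 else 0) := by
  have block₀ : ∑ l : Fin (3 * i - 1) with l.val < i, vegaW i μ ν (.inl l) = 3 * i - 2 := by
    rw [sum_vegaW_inl_filter_mem_Ico μ ν hi (a := 0) (b := i) (by omega) _ (by simp)]
    simp only [mem_Ico]
    split_ifs <;> omega
  have block₁ : ∑ l : Fin (3 * i - 1) with i ≤ l.val ∧ l.val < 2 * i,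
      vegaW i μ ν (.inl l) = 3 * i - 2 - ν := by
    rw [sum_vegaW_inl_filter_mem_Ico μ ν hi (a := i) (b := 2 * i) (by omega) _ (by simp)]
    simp only [mem_Ico]
    split_ifs <;> omega
  have block₂ : ∑ l : Fin (3 * i - 1) with 2 * i ≤ l.val,
      vegaW i μ ν (.inl l) = 3 * i - 3 := by
    rw [sum_vegaW_inl_filter_mem_Ico μ ν hi (a := 2 * i) (b := 3 * i - 1) le_rfl _
      (fun l => by simp [l.isLt])]
    simp only [mem_Ico]
    split_ifs <;> omega
  rw [SimpleGraph.sum_neighborFinset_sum_type, sum_filter _ fun h' => vegaW i μ ν (.inr h'),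
    Fin.sum_univ_eight]
  fin_cases h <;>
    simp (config := { decide := true }) [vega_adj_inr_inl, vega_adj_inr_inr, vegaBase, block₀,
      block₁, block₂] <;>
    simp (config := { decide := true }) [vegaW, vegaW00, vegaF, vegaG] <;>
    ring

end Vega

open scoped Classical in
/-- For i ≥ 2 and μ, ν ∈ {0,1}, the total weight of ω_{μν} on Υ_i^{μν} equals
3(9i-(6+μ+ν)) - 1, and for every vertex z of Υ_i^{μν} (i.e. excluding y when
μ = 1 and v_{2i-1} when ν = 1) the weight of its neighbourhood equals
9i - (6+μ+ν). -/
theorem stmt_16 (i μ ν : ℕ) (hi : 2 ≤ i) (hμ : μ ≤ 1) (hν : ν ≤ 1) :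
    (∑ z, vegaW i μ ν z = 3 * (9 * (i : ℤ) - (6 + μ + ν)) - 1) ∧
      ∀ z : Fin (3 * i - 1) ⊕ Fin 8,
        (μ = 1 → z ≠ Sum.inr 1) →
        (ν = 1 → z ≠ Sum.inl ⟨2 * i - 1, by omega⟩) →
        ∑ z' ∈ (vega i).neighborFinset z, vegaW i μ ν z'
          = 9 * (i : ℤ) - (6 + μ + ν) := by
  refine ⟨sum_vegaW μ ν hi, fun z hy hv => ?_⟩
  rcases z with j | h
  · rw [sum_vegaW_neighborFinset_inl μ ν hi]
    rcases Nat.le_one_iff_eq_zero_or_eq_one.1 hν with rfl | rfl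
    · simp
    · have : (j : ℕ) ≠ 2 * i - 1 := fun hj => hv rfl (congrArg Sum.inl (Fin.ext hj))
      simp [this]
  · rw [sum_vegaW_neighborFinset_inr μ ν hi]
    rcases Nat.le_one_iff_eq_zero_or_eq_one.1 hμ with rfl | rfl
    · simp
    · have : h ≠ 1 := fun h1 => hy rfl (congrArg Sum.inr h1)
      simp [this]
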